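/- Let V be a 2-dimensional normed space, V = E₁ ⊕ E₂ = F₁ ⊕ F₂ two direct sum splittings with dim E₁ = dim F₁ = 1. Suppose T_t : V → V are linear maps (t ≥ 0) such that: (i) for some λ₁ < 0 < λ₂ and small ε > 0 and all large t, e^{(λ₁-ε)t}|v| ≤ |T_t v| ≤ e^{(λ₁+ε)t}|v| for all v ∈ E₁ and e^{(λ₂-ε)t}|v| ≤ |T_t v| ≤ e^{(λ₂+ε)t}|v| for all v ∈ E₂; (ii) there exist C ≥ 1, λ > 0 with |T_t w| ≤ C e^{-λ t}|T_t u| for all unit vectors w ∈ F₁, u ∈ F₂ and all t ≥ 0. Then E₁ = F₁. -/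
import Mathlib


open Filter Real

/-- decay of `t ↦ exp (c*t) * K` for `c < 0`. -/
private lemma aux_decay {c K : ℝ} (hc : c < 0) :
    Filter.Tendsto (fun t : ℝ => Real.exp (c * t) * K) Filter.atTop (nhds 0) := by
  have h1 : Filter.Tendsto (fun t : ℝ => Real.exp (c * t)) Filter.atTop (nhds 0) :=
    Real.tendsto_exp_comp_nhds_zero.mpr (tendsto_id.const_mul_atTop_of_neg hc)
  simpa using h1.mul_const K

set_option maxHeartbeats 1000000

/-- in a 2-dimensional normed space with two splittings
`V = E₁ ⊕ E₂ = F₁ ⊕ F₂`, `dim E₁ = dim F₁ = 1`: if `T_t` satisfies two-sided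
Oseledec-type exponential estimates on `E₁, E₂` with rates `λ₁ < 0 < λ₂` (for all
large `t`) and `F₁ ⊕ F₂` is a dominated splitting for `T_t`, then `E₁ = F₁`. -/
theorem stmt4 {V : Type*} [NormedAddCommGroup V] [NormedSpace ℝ V]
    [FiniteDimensional ℝ V] (hdim : Module.finrank ℝ V = 2)
    (E₁ E₂ F₁ F₂ : Submodule ℝ V)
    (hE : IsCompl E₁ E₂) (hF : IsCompl F₁ F₂)
    (hE₁ : Module.finrank ℝ E₁ = 1) (hF₁ : Module.finrank ℝ F₁ = 1)
    (T : ℝ → V →ₗ[ℝ] V) (lam₁ lam₂ ε : ℝ)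
    (hlam₁ : lam₁ < 0) (hlam₂ : 0 < lam₂)
    (hε : 0 < ε) (hε' : ε < min |lam₁| lam₂ / 8)
    (hOsc : ∃ T₀ : ℝ, ∀ t, T₀ ≤ t →
      (∀ v ∈ E₁, Real.exp ((lam₁ - ε) * t) * ‖v‖ ≤ ‖T t v‖ ∧
          ‖T t v‖ ≤ Real.exp ((lam₁ + ε) * t) * ‖v‖) ∧
      (∀ v ∈ E₂, Real.exp ((lam₂ - ε) * t) * ‖v‖ ≤ ‖T t v‖ ∧
          ‖T t v‖ ≤ Real.exp ((lam₂ + ε) * t) * ‖v‖))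
    (hdom : ∃ C lam : ℝ, 1 ≤ C ∧ 0 < lam ∧
      ∀ w ∈ F₁, ‖w‖ = 1 → ∀ u ∈ F₂, ‖u‖ = 1 → ∀ t : ℝ, 0 ≤ t →
        ‖T t w‖ ≤ C * Real.exp (-lam * t) * ‖T t u‖) :
    E₁ = F₁ := by
  obtain ⟨T₀, hT⟩ := hOsc
  obtain ⟨C, lam, hC, hlam, hdom⟩ := hdom
  -- smallness of ε
  have habs : |lam₁| = -lam₁ := abs_of_neg hlam₁
  have hmin1 := min_le_left |lam₁| lam₂
  have hmin2 := min_le_right |lam₁| lam₂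
  have hε₁ : ε < -lam₁ := by nlinarith
  have hε₂ : ε < lam₂ := by nlinarith
  -- dimensions of the complements
  have hE₂ : Module.finrank ℝ E₂ = 1 := by
    have h := Submodule.finrank_add_eq_of_isCompl hE
    omega
  have hF₂ : Module.finrank ℝ F₂ = 1 := by
    have h := Submodule.finrank_add_eq_of_isCompl hF
    omega
  -- unit vectors in F₁ and F₂
  have hF₁bot : F₁ ≠ ⊥ := by
    intro h; rw [h] at hF₁; simp at hF₁
  have hF₂bot : F₂ ≠ ⊥ := by
    intro h; rw [h] at hF₂; simp at hF₂
  obtain ⟨w₀, hw₀F, hw₀⟩ := Submodule.exists_mem_ne_zero_of_ne_bot hF₁bot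
  obtain ⟨u₀, hu₀F, hu₀⟩ := Submodule.exists_mem_ne_zero_of_ne_bot hF₂bot
  obtain ⟨w, hwF, hw1⟩ : ∃ w ∈ F₁, ‖w‖ = 1 :=
    ⟨_, F₁.smul_mem (‖w₀‖⁻¹ : ℝ) hw₀F, norm_smul_inv_norm hw₀⟩
  obtain ⟨u, huF, hu1⟩ : ∃ u ∈ F₂, ‖u‖ = 1 :=
    ⟨_, F₂.smul_mem (‖u₀‖⁻¹ : ℝ) hu₀F, norm_smul_inv_norm hu₀⟩
  have hwne : w ≠ 0 := by
    intro h; rw [h, norm_zero] at hw1; norm_num at hw1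
  -- decompose w and u along E₁ ⊕ E₂
  have hsup : E₁ ⊔ E₂ = ⊤ := hE.sup_eq_top
  obtain ⟨a, haE, b, hbE, hab⟩ := Submodule.mem_sup.mp (hsup ▸ Submodule.mem_top (x := w))
  obtain ⟨p, hpE, q, hqE, hpq⟩ := Submodule.mem_sup.mp (hsup ▸ Submodule.mem_top (x := u))
  -- main claim: w ∈ E₁, i.e. b = 0
  have hwE : w ∈ E₁ := by
    by_contra hwE
    have hb : b ≠ 0 := by
      intro h
      apply hwE
      rw [← hab, h, add_zero]; exact haE
    have hbpos : (0:ℝ) < ‖b‖ := norm_pos_iff.mpr hb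
    -- q is a multiple of b since E₂ is one-dimensional
    have hspan : Submodule.span ℝ {b} = E₂ := by
      apply Submodule.eq_of_le_of_finrank_eq
      · rwa [Submodule.span_singleton_le_iff_mem]
      · rw [finrank_span_singleton hb, hE₂]
    obtain ⟨s, hs⟩ := Submodule.mem_span_singleton.mp (hspan ▸ hqE)
    set A : ℝ := ‖p - s • a‖ with hA
    have hAnn : 0 ≤ A := norm_nonneg _
    set K : ℝ := ‖a‖ + 2 * A * C with hK
    -- the key eventual inequality
    have hkey : ∀ᶠ t in atTop, ‖b‖ ≤ Real.exp ((lam₁ + 2 * ε - lam₂) * t) * K := by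
      have hsm : ∀ᶠ t in atTop, C * |s| * Real.exp (-lam * t) ≤ 1 / 2 := by
        have h0 : Filter.Tendsto (fun t : ℝ => Real.exp (-lam * t) * (C * |s|))
            Filter.atTop (nhds 0) := aux_decay (by linarith)
        have := h0.eventually_le_const (by norm_num : (0:ℝ) < 1 / 2)
        filter_upwards [this] with t ht
        linarith [ht, le_of_eq (mul_comm (Real.exp (-lam * t)) (C * |s|))]
      filter_upwards [eventually_ge_atTop T₀, eventually_ge_atTop (0:ℝ), hsm]
        with t hT₀ ht0 hsmt
      obtain ⟨hO1, hO2⟩ := hT t hT₀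
      have hdomwu := hdom w hwF hw1 u huF hu1 t ht0
      -- u - s•w lies in E₁
      have husw : u - s • w = p - s • a := by
        rw [← hab, ← hpq, ← hs]; module
      have hmemE1 : u - s • w ∈ E₁ := by
        rw [husw]; exact E₁.sub_mem hpE (E₁.smul_mem s haE)
      have h2 : ‖T t (u - s • w)‖ ≤ Real.exp ((lam₁ + ε) * t) * A := by
        have := (hO1 _ hmemE1).2
        rwa [husw] at this ⊢
      -- bound ‖T t u‖
      have h3 : ‖T t u‖ ≤ ‖T t (u - s • w)‖ + |s| * ‖T t w‖ := by
        have heq : T t u = T t (u - s • w) + s • T t w := by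
          rw [map_sub, map_smul]; abel
        calc ‖T t u‖ = ‖T t (u - s • w) + s • T t w‖ := by rw [← heq]
          _ ≤ ‖T t (u - s • w)‖ + ‖s • T t w‖ := norm_add_le _ _
          _ = ‖T t (u - s • w)‖ + |s| * ‖T t w‖ := by rw [norm_smul, Real.norm_eq_abs]
      have h4 : |s| * ‖T t w‖ ≤ C * |s| * Real.exp (-lam * t) * ‖T t u‖ := by
        have := mul_le_mul_of_nonneg_left hdomwu (abs_nonneg s)
        calc |s| * ‖T t w‖ ≤ |s| * (C * Real.exp (-lam * t) * ‖T t u‖) := this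
          _ = C * |s| * Real.exp (-lam * t) * ‖T t u‖ := by ring
      have h5 : C * |s| * Real.exp (-lam * t) * ‖T t u‖ ≤ (1 / 2) * ‖T t u‖ :=
        mul_le_mul_of_nonneg_right hsmt (norm_nonneg _)
      have hTu : ‖T t u‖ ≤ 2 * A * Real.exp ((lam₁ + ε) * t) := by
        have hr : 2 * A * Real.exp ((lam₁ + ε) * t)
            = 2 * (Real.exp ((lam₁ + ε) * t) * A) := by ring
        linarith [h2, h3, h4, h5]
      -- bound ‖T t w‖
      have hexple : Real.exp (-lam * t) ≤ 1 :=
        Real.exp_le_one_iff.mpr (by nlinarith)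
      have hTw : ‖T t w‖ ≤ 2 * A * C * Real.exp ((lam₁ + ε) * t) := by
        have h6 : ‖T t w‖ ≤ C * Real.exp (-lam * t) * (2 * A * Real.exp ((lam₁ + ε) * t)) :=
          le_trans hdomwu (by
            apply mul_le_mul_of_nonneg_left hTu
            positivity)
        have h7 : C * Real.exp (-lam * t) * (2 * A * Real.exp ((lam₁ + ε) * t)) ≤
            C * 1 * (2 * A * Real.exp ((lam₁ + ε) * t)) := by
          apply mul_le_mul_of_nonneg_right _ (by positivity)
          exact mul_le_mul_of_nonneg_left hexple (by linarith)
        calc ‖T t w‖ ≤ C * Real.exp (-lam * t) * (2 * A * Real.exp ((lam₁ + ε) * t)) := h6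
          _ ≤ C * 1 * (2 * A * Real.exp ((lam₁ + ε) * t)) := h7
          _ = 2 * A * C * Real.exp ((lam₁ + ε) * t) := by ring
      -- lower bound on ‖T t w‖ from the E₂-component b
      have hTb : ‖T t b‖ ≤ ‖T t w‖ + ‖T t a‖ := by
        have heq : T t b = T t w - T t a := by
          rw [← hab, map_add]; abel
        rw [heq]; exact norm_sub_le _ _
      have hlow : Real.exp ((lam₂ - ε) * t) * ‖b‖ ≤ ‖T t b‖ := (hO2 b hbE).1
      have hupa : ‖T t a‖ ≤ Real.exp ((lam₁ + ε) * t) * ‖a‖ := (hO1 a haE).2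
      have hmain : Real.exp ((lam₂ - ε) * t) * ‖b‖ ≤ Real.exp ((lam₁ + ε) * t) * K := by
        have hr2 : Real.exp ((lam₁ + ε) * t) * (‖a‖ + 2 * A * C)
            = Real.exp ((lam₁ + ε) * t) * ‖a‖ + 2 * A * C * Real.exp ((lam₁ + ε) * t) := by
          ring
        rw [hK]; linarith [hlow, hTb, hTw, hupa]
      -- divide by exp ((lam₂ - ε) * t)
      have hGpos : (0:ℝ) < Real.exp ((lam₂ - ε) * t) := Real.exp_pos _
      have hprod : Real.exp ((lam₂ - ε) * t) * (Real.exp ((lam₁ + 2 * ε - lam₂) * t) * K)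
          = Real.exp ((lam₁ + ε) * t) * K := by
        rw [← mul_assoc, ← Real.exp_add]
        ring_nf
      have := hmain.trans_eq hprod.symm
      exact le_of_mul_le_mul_left this hGpos
    -- contradiction: the right-hand side decays to 0 while ‖b‖ > 0
    have hdec : Filter.Tendsto (fun t : ℝ => Real.exp ((lam₁ + 2 * ε - lam₂) * t) * K)
        Filter.atTop (nhds 0) := aux_decay (by linarith)
    have hev := hdec.eventually_lt_const hbpos
    obtain ⟨t, h1, h2⟩ := (hkey.and hev).exists
    linarith
  -- conclude: F₁ = span {w} ≤ E₁, and equal dimensions give equality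
  have hspanw : Submodule.span ℝ {w} = F₁ := by
    apply Submodule.eq_of_le_of_finrank_eq
    · rwa [Submodule.span_singleton_le_iff_mem]
    · rw [finrank_span_singleton hwne, hF₁]
  have hle : F₁ ≤ E₁ := by
    rw [← hspanw, Submodule.span_singleton_le_iff_mem]
    exact hwE
  exact (Submodule.eq_of_le_of_finrank_eq hle (hF₁.trans hE₁.symm)).symm
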